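/- Let N ≥ 1. There exists a constant C > 0 such that for every t > 0 and all n, k ∈ ℤ^N with n ≠ k, the inequality |G_{t,N}(n) − G_{t,N}(k)| ≤ C · |n − k| · t^{−1/2 − N/2} holds. -/

import Mathlib

/-- The modified Bessel function of the first kind of integer order `m`. -/
noncomputable def besselIZ (m : ℤ) (t : ℝ) : ℝ :=
  (1 / Real.pi) * ∫ θ in (0 : ℝ)..Real.pi, Real.exp (t * Real.cos θ) * Real.cos ((m : ℝ) * θ)

/-- The `N`-dimensional discrete heat kernel. -/
noncomputable def heatKernel (N : ℕ) (t : ℝ) (n : Fin N → ℤ) : ℝ :=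
  ∏ k, Real.exp (-2 * t) * besselIZ (n k) (2 * t)

/-- The ℓ¹ norm of a point of `ℤ^N`. -/
noncomputable def znorm {N : ℕ} (n : Fin N → ℤ) : ℝ := ∑ i, |(n i : ℝ)|

/-!
Write `e^{-s} I_m(s) = π⁻¹ ∫₀^π e^{s (cos θ - 1)} cos (m θ) dθ`. Since `cos θ - 1 ≤ -2θ²/π²` on
`[0, π]`, the weight `e^{s (cos θ - 1)}` is dominated by a Gaussian of width `≍ s^{-1/2}`. Integrating
`|cos (m θ)| ≤ 1` against it gives `|e^{-s} I_m(s)| ≤ s^{-1/2}`, and integrating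
`|cos (m θ) - cos (m' θ)| ≤ |m - m'| θ` gives `|e^{-s} (I_m(s) - I_{m'}(s))| ≤ |m - m'| / s`.
Telescoping the product over the `N` coordinates, each term has one factor of the second kind and
`N - 1` factors of the first kind, which yields `|n - k| · t⁻¹ · t^{-(N-1)/2}` up to constants.
-/

open Real MeasureTheory Set Finset intervalIntegral

lemma exp_mul_cos_sub_one_le {s θ : ℝ} (hs : 0 ≤ s) (hθ : |θ| ≤ π) :
    exp (s * (cos θ - 1)) ≤ exp (-(2 * s / π ^ 2) * θ ^ 2) := by
  rw [exp_le_exp, show -(2 * s / π ^ 2) * θ ^ 2 = s * (1 - 2 / π ^ 2 * θ ^ 2 - 1) by ring]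
  gcongr
  exact cos_le_one_sub_mul_cos_sq hθ

lemma exp_neg_mul_besselIZ (m : ℤ) (s : ℝ) :
    exp (-s) * besselIZ m s = π⁻¹ * ∫ θ in 0..π, exp (s * (cos θ - 1)) * cos (m * θ) := by
  rw [besselIZ, one_div, mul_left_comm, ← intervalIntegral.integral_const_mul]
  congr 2 with θ
  rw [← mul_assoc, ← exp_add]
  ring_nf

lemma integral_exp_neg_mul_sq_le {b : ℝ} (hb : 0 < b) {a : ℝ} (ha : 0 ≤ a) :
    ∫ θ in 0..a, exp (-b * θ ^ 2) ≤ √(π / b) / 2 := by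
  rw [integral_of_le ha, ← integral_gaussian_Ioi]
  exact setIntegral_mono_set (integrable_exp_neg_mul_sq hb).integrableOn
    (.of_forall fun θ => (exp_pos _).le) Ioc_subset_Ioi_self.eventuallyLE

lemma integral_mul_exp_neg_mul_sq_le {b : ℝ} (hb : 0 < b) (a : ℝ) :
    ∫ θ in 0..a, θ * exp (-b * θ ^ 2) ≤ (2 * b)⁻¹ := by
  have hderiv : ∀ θ ∈ uIcc 0 a,
      HasDerivAt (fun x => -(2 * b)⁻¹ * exp (-b * x ^ 2)) (θ * exp (-b * θ ^ 2)) θ := by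
    intro θ _
    refine (((hasDerivAt_pow 2 θ).const_mul (-b)).exp.const_mul (-(2 * b)⁻¹)).congr_deriv ?_
    field_simp
    ring
  rw [integral_eq_sub_of_hasDerivAt hderiv (by apply Continuous.intervalIntegrable; fun_prop)]
  have : 0 ≤ (2 * b)⁻¹ * exp (-b * a ^ 2) := by positivity
  rw [zero_pow two_ne_zero, mul_zero, exp_zero]
  linarith

lemma abs_integral_exp_mul_cos_sub_one_mul_le {s : ℝ} (hs : 0 ≤ s) {f g : ℝ → ℝ}
    (hf : Continuous f) (hg : Continuous g) (hfg : ∀ θ ∈ Icc 0 π, |f θ| ≤ g θ) :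
    |∫ θ in 0..π, exp (s * (cos θ - 1)) * f θ| ≤
      ∫ θ in 0..π, exp (-(2 * s / π ^ 2) * θ ^ 2) * g θ := by
  refine (abs_integral_le_integral_abs pi_pos.le).trans <|
    integral_mono_on pi_pos.le (by apply Continuous.intervalIntegrable; fun_prop)
      (by apply Continuous.intervalIntegrable; fun_prop) fun θ hθ => ?_
  rw [abs_mul, abs_exp]
  have hθ' : |θ| ≤ π := abs_le.2 ⟨by linarith [hθ.1, pi_pos], hθ.2⟩
  exact mul_le_mul (exp_mul_cos_sub_one_le hs hθ') (hfg θ hθ) (abs_nonneg _) (exp_pos _).le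

lemma abs_exp_neg_mul_besselIZ_le (m : ℤ) {s : ℝ} (hs : 0 < s) :
    |exp (-s) * besselIZ m s| ≤ (√s)⁻¹ := by
  have hb : 0 < 2 * s / π ^ 2 := by positivity
  have hgauss := abs_integral_exp_mul_cos_sub_one_mul_le hs.le (by fun_prop : Continuous
    fun θ : ℝ => cos (m * θ)) continuous_const fun θ _ => abs_cos_le_one (m * θ)
  simp only [mul_one] at hgauss
  have hsqrt : √(π / (2 * s / π ^ 2)) / 2 ≤ π * (√s)⁻¹ := by
    rw [div_le_iff₀ two_pos, sqrt_le_iff, mul_pow, mul_pow, inv_pow, sq_sqrt hs.le]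
    refine ⟨by positivity, ?_⟩
    rw [div_div_eq_mul_div, div_le_iff₀ (by positivity)]
    field_simp
    nlinarith [pi_le_four, pi_pos]
  rw [exp_neg_mul_besselIZ, abs_mul, abs_of_pos (inv_pos.2 pi_pos)]
  calc π⁻¹ * |∫ θ in 0..π, exp (s * (cos θ - 1)) * cos (m * θ)|
      ≤ π⁻¹ * (√(π / (2 * s / π ^ 2)) / 2) := by
        gcongr
        exact hgauss.trans (integral_exp_neg_mul_sq_le hb pi_pos.le)
    _ ≤ π⁻¹ * (π * (√s)⁻¹) := by gcongr
    _ = (√s)⁻¹ := by field_simp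

lemma abs_exp_neg_mul_besselIZ_sub_le (m m' : ℤ) {s : ℝ} (hs : 0 < s) :
    |exp (-s) * besselIZ m s - exp (-s) * besselIZ m' s| ≤ |(m - m' : ℝ)| / s := by
  have hb : 0 < 2 * s / π ^ 2 := by positivity
  have hgauss := abs_integral_exp_mul_cos_sub_one_mul_le hs.le
    (by fun_prop : Continuous fun θ : ℝ => cos (m * θ) - cos (m' * θ))
    (by fun_prop : Continuous fun θ : ℝ => |(m - m' : ℝ)| * θ) fun θ hθ => by
      simpa [← sub_mul, abs_mul, abs_of_nonneg hθ.1] using abs_cos_sub_cos_le (m * θ) (m' * θ)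
  have hint (j : ℤ) : IntervalIntegrable (fun θ => exp (s * (cos θ - 1)) * cos (j * θ))
      volume 0 π := by apply Continuous.intervalIntegrable; fun_prop
  rw [exp_neg_mul_besselIZ, exp_neg_mul_besselIZ, ← mul_sub, ← integral_sub (hint m) (hint m'),
    abs_mul, abs_of_pos (inv_pos.2 pi_pos)]
  simp only [← mul_sub] at hgauss ⊢
  calc π⁻¹ * |∫ θ in 0..π, exp (s * (cos θ - 1)) * (cos (m * θ) - cos (m' * θ))|
      ≤ π⁻¹ * (|(m - m' : ℝ)| * (2 * (2 * s / π ^ 2))⁻¹) := by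
        gcongr
        refine hgauss.trans ?_
        simp only [mul_left_comm _ |(m - m' : ℝ)|, intervalIntegral.integral_const_mul,
          mul_comm (exp _)]
        gcongr
        exact integral_mul_exp_neg_mul_sq_le hb π
    _ = π / 4 * (|(m - m' : ℝ)| / s) := by field_simp; ring
    _ ≤ |(m - m' : ℝ)| / s := mul_le_of_le_one_left (by positivity) (by linarith [pi_le_four])

lemma abs_prod_sub_prod_mul_le {ι : Type*} (s : Finset ι) {f g : ι → ℝ} {B : ℝ} (hB : 0 ≤ B)
    (hf : ∀ i ∈ s, |f i| ≤ B) (hg : ∀ i ∈ s, |g i| ≤ B) :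
    |∏ i ∈ s, f i - ∏ i ∈ s, g i| * B ≤ (∑ i ∈ s, |f i - g i|) * B ^ s.card := by
  classical
  induction s using Finset.induction_on with
  | empty => simp
  | @insert a s ha ih =>
    have hfs : |∏ i ∈ s, f i| ≤ B ^ s.card := by
      rw [abs_prod, ← prod_const]
      exact prod_le_prod (fun i _ => abs_nonneg _) fun i hi => hf i (mem_insert_of_mem hi)
    have hga := hg a (mem_insert_self a s)
    have ih' := ih (fun i hi => hf i (mem_insert_of_mem hi)) fun i hi => hg i (mem_insert_of_mem hi)
    rw [prod_insert ha, prod_insert ha, sum_insert ha, card_insert_of_notMem ha, pow_succ]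
    calc |f a * ∏ i ∈ s, f i - g a * ∏ i ∈ s, g i| * B
        = |(f a - g a) * ∏ i ∈ s, f i + g a * (∏ i ∈ s, f i - ∏ i ∈ s, g i)| * B := by ring_nf
      _ ≤ (|f a - g a| * |∏ i ∈ s, f i| + |g a| * |∏ i ∈ s, f i - ∏ i ∈ s, g i|) * B := by
          gcongr
          rw [← abs_mul, ← abs_mul]
          exact abs_add_le _ _
      _ ≤ |f a - g a| * B ^ s.card * B + B * ((∑ i ∈ s, |f i - g i|) * B ^ s.card) := by
          rw [add_mul, mul_assoc (|g a|)]
          gcongr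
      _ = (|f a - g a| + ∑ i ∈ s, |f i - g i|) * (B ^ s.card * B) := by ring

theorem stmt9_general (N : ℕ) :
    ∃ C : ℝ, 0 < C ∧ ∀ t : ℝ, 0 < t → ∀ n k : Fin N → ℤ, n ≠ k →
      |heatKernel N t n - heatKernel N t k| ≤
        C * znorm (n - k) * t ^ (-(1 / 2 : ℝ) - (N : ℝ) / 2) := by
  refine ⟨1, one_pos, fun t ht n k _ => ?_⟩
  set u := 2 * t
  have hu : 0 < u := by positivity
  set B := u ^ (-(1 / 2) : ℝ)
  have hfactor (m : ℤ) : |exp (-u) * besselIZ m u| ≤ B :=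
    (abs_exp_neg_mul_besselIZ_le m hu).trans_eq (by rw [sqrt_eq_rpow, ← rpow_neg hu.le])
  have hdiff : ∑ i, |exp (-u) * besselIZ (n i) u - exp (-u) * besselIZ (k i) u|
      ≤ znorm (n - k) / u := by
    rw [znorm, sum_div]
    gcongr with i
    simpa using abs_exp_neg_mul_besselIZ_sub_le (n i) (k i) hu
  have htelescope := (abs_prod_sub_prod_mul_le univ (by positivity) (fun i _ => hfactor (n i))
    fun i _ => hfactor (k i)).trans (mul_le_mul_of_nonneg_right hdiff (by positivity))
  rw [card_univ, Fintype.card_fin] at htelescope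
  have hznorm : 0 ≤ znorm (n - k) := sum_nonneg fun i _ => abs_nonneg _
  calc |heatKernel N t n - heatKernel N t k|
      ≤ znorm (n - k) * u ^ (-(1 / 2 : ℝ) - (N : ℝ) / 2) := by
        rw [← mul_le_mul_iff_of_pos_right (by positivity : 0 < B)]
        simp only [heatKernel, neg_mul]
        refine htelescope.trans_eq ?_
        rw [← rpow_natCast, ← rpow_mul hu.le, div_eq_mul_inv, ← rpow_neg_one, mul_assoc,
          mul_assoc, ← rpow_add hu, ← rpow_add hu]
        ring_nf
    _ ≤ 1 * znorm (n - k) * t ^ (-(1 / 2 : ℝ) - (N : ℝ) / 2) := by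
        rw [one_mul]
        gcongr _ * ?_
        exact rpow_le_rpow_of_nonpos ht (by linarith) (by linarith [(N.cast_nonneg : (0 : ℝ) ≤ N)])

/-- Lipschitz-type estimate for the discrete heat kernel. -/
theorem stmt9 (N : ℕ) (hN : 1 ≤ N) :
    ∃ C : ℝ, 0 < C ∧ ∀ t : ℝ, 0 < t → ∀ n k : Fin N → ℤ, n ≠ k →
      |heatKernel N t n - heatKernel N t k| ≤
        C * znorm (n - k) * t ^ (-(1 / 2 : ℝ) - (N : ℝ) / 2) :=
  stmt9_general N
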